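/- arXiv:0711.3070 — 4 statements merged into one kernel-verified Lean document; each statement's English description precedes it below -/
import Mathlib

section
/- Let p(x) = x^4 - 12x^3 + 14x^2 + 12x + 1 and q(x) = (x^2+1)(x^4 - 18x^3 + 74x^2 + 18x + 1) be polynomials with rational coefficients. Then p(x)^3 - q(x)^2 = 1728 · x^5 · (x^2 - 11x - 1). -/
open Polynomial

/-- The coefficient polynomial `p` of the Weierstraß equation. -/
noncomputable def pPoly : Polynomial ℚ := X ^ 4 - 12 * X ^ 3 + 14 * X ^ 2 + 12 * X + 1

/-- The coefficient polynomial `q` of the Weierstraß equation. -/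
noncomputable def qPoly : Polynomial ℚ :=
  (X ^ 2 + 1) * (X ^ 4 - 18 * X ^ 3 + 74 * X ^ 2 + 18 * X + 1)

theorem stmt0 : pPoly ^ 3 - qPoly ^ 2 = 1728 * X ^ 5 * (X ^ 2 - 11 * X - 1) := by
  unfold pPoly qPoly; ring
end

section
/- Let f(x,y) = 4y^3 - 3y·p(x) + q(x), where p(x) = x^4 - 12x^3 + 14x^2 + 12x + 1 and q(x) = (x^2+1)(x^4 - 18x^3 + 74x^2 + 18x + 1). Define x(t) = t^2(t-1)/(t+1) and y(t) = (t^2+1)(t^4 - 2t^3 - 6t^2 + 2t + 1)/(2(t+1)^2) as rational functions of t. Then f(x(t), y(t)) = 0 identically as rational functions (i.e., for every t ≠ -1 in any field of characteristic 0). -/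
theorem stmt1 (F : Type*) [Field F] [CharZero F] (t : F) (ht : t ≠ -1) :
    let x : F := t ^ 2 * (t - 1) / (t + 1)
    let y : F := (t ^ 2 + 1) * (t ^ 4 - 2 * t ^ 3 - 6 * t ^ 2 + 2 * t + 1) / (2 * (t + 1) ^ 2)
    let p : F := x ^ 4 - 12 * x ^ 3 + 14 * x ^ 2 + 12 * x + 1
    let q : F := (x ^ 2 + 1) * (x ^ 4 - 18 * x ^ 3 + 74 * x ^ 2 + 18 * x + 1)
    4 * y ^ 3 - 3 * y * p + q = 0 := by
  intro x y p q
  have h1 : t + 1 ≠ 0 := fun h => ht (by linear_combination h)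
  set u : F := t + 1 with hu
  set A : F := t ^ 2 * (t - 1) with hA
  set B : F := (t ^ 2 + 1) * (t ^ 4 - 2 * t ^ 3 - 6 * t ^ 2 + 2 * t + 1) with hB
  have hx' : x * u = A := div_mul_cancel₀ _ h1
  have hy' : y * (2 * u ^ 2) = B :=
    div_mul_cancel₀ _ (mul_ne_zero two_ne_zero (pow_ne_zero _ h1))
  -- powers of y
  have hy3 : y ^ 3 * (8 * u ^ 6) = B ^ 3 := by
    linear_combination (4 * y ^ 2 * u ^ 4 + 2 * y * u ^ 2 * B + B ^ 2) * hy'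
  -- p cleared
  have hp : p * u ^ 4 =
      A ^ 4 - 12 * A ^ 3 * u + 14 * A ^ 2 * u ^ 2 + 12 * A * u ^ 3 + u ^ 4 := by
    show (x ^ 4 - 12 * x ^ 3 + 14 * x ^ 2 + 12 * x + 1) * u ^ 4 = _
    linear_combination (((x * u) ^ 3 + (x * u) ^ 2 * A + (x * u) * A ^ 2 + A ^ 3)
      - 12 * u * ((x * u) ^ 2 + (x * u) * A + A ^ 2)
      + 14 * u ^ 2 * ((x * u) + A) + 12 * u ^ 3) * hx'
  -- q cleared
  have hq : q * u ^ 6 =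
      (A ^ 2 + u ^ 2) * (A ^ 4 - 18 * A ^ 3 * u + 74 * A ^ 2 * u ^ 2 + 18 * A * u ^ 3 + u ^ 4) := by
    show (x ^ 2 + 1) * (x ^ 4 - 18 * x ^ 3 + 74 * x ^ 2 + 18 * x + 1) * u ^ 6 = _
    linear_combination (((x * u) + A) *
        ((x * u) ^ 4 - 18 * (x * u) ^ 3 * u + 74 * (x * u) ^ 2 * u ^ 2 + 18 * (x * u) * u ^ 3 + u ^ 4)
      + (A ^ 2 + u ^ 2) * (((x * u) ^ 3 + (x * u) ^ 2 * A + (x * u) * A ^ 2 + A ^ 3)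
        - 18 * u * ((x * u) ^ 2 + (x * u) * A + A ^ 2)
        + 74 * u ^ 2 * ((x * u) + A) + 18 * u ^ 3)) * hx'
  have h8 : (8 : F) * u ^ 6 ≠ 0 := mul_ne_zero (by norm_num) (pow_ne_zero _ h1)
  have key : (4 * y ^ 3 - 3 * y * p + q) * (8 * u ^ 6) = 0 := by
    linear_combination 4 * hy3 - 12 * (p * u ^ 4) * hy' - 12 * B * hp + 8 * hq
  exact (mul_eq_zero.mp key).resolve_right h8
end

section
/- Define rational functions a(t,b) = (-b(t^3+2t^2-1) + t^5 - 5t^3 - 5t^2 - 3) / (2t^2(t-1)(t^2+t-1)) and c(t,b) = -(b·t^2(t^3-2t+1) + 3t^5 + 5t^3 - 5t^2 + 1) / (2(t+1)(t^2+t-1)). Let x(t) = t^2(t-1)/(t+1), y(t) = (t^2+1)(t^4-2t^3-6t^2+2t+1)/(2(t+1)^2), and s(t) = a·x(t)^2 + b·x(t) + c. Then for every b and every t ∉ {0, 1, -1, roots of t^2+t-1}, setting a = a(t,b) and c = c(t,b), the function u ↦ s(u) - y(u) vanishes to order at least 2 at u = t (i.e., s(t) = y(t) and s'(t) = y'(t)).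 -/
/-! The tangency conditions `s(t) = y(t)`, `s'(t) = y'(t)` are linear in `(a, c)` once `b` is fixed,
and `tanA`, `tanC` are their solution; with closed forms for `x'` and `y'` both conditions become
polynomial identities after clearing denominators. -/

/-- The parametrization `x(t)` of the trigonal curve. -/
noncomputable def paramX (t : ℝ) : ℝ := t ^ 2 * (t - 1) / (t + 1)

/-- The parametrization `y(t)` of the trigonal curve. -/
noncomputable def paramY (t : ℝ) : ℝ :=
  (t ^ 2 + 1) * (t ^ 4 - 2 * t ^ 3 - 6 * t ^ 2 + 2 * t + 1) / (2 * (t + 1) ^ 2)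

/-- Coefficient `a` of a section simply tangent to the curve at parameter `t`. -/
noncomputable def tanA (t b : ℝ) : ℝ :=
  (-b * (t ^ 3 + 2 * t ^ 2 - 1) + t ^ 5 - 5 * t ^ 3 - 5 * t ^ 2 - 3) /
    (2 * t ^ 2 * (t - 1) * (t ^ 2 + t - 1))

/-- Coefficient `c` of a section simply tangent to the curve at parameter `t`. -/
noncomputable def tanC (t b : ℝ) : ℝ :=
  -(b * t ^ 2 * (t ^ 3 - 2 * t + 1) + 3 * t ^ 5 + 5 * t ^ 3 - 5 * t ^ 2 + 1) /
    (2 * (t + 1) * (t ^ 2 + t - 1))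

theorem HasDerivAt.quadratic_comp_sub {𝕜 : Type*} [NontriviallyNormedField 𝕜]
    {x y : 𝕜 → 𝕜} {x' y' t : 𝕜} (a b c : 𝕜) (hx : HasDerivAt x x' t) (hy : HasDerivAt y y' t) :
    HasDerivAt (fun u => a * x u ^ 2 + b * x u + c - y u) ((2 * a * x t + b) * x' - y') t :=
  ((((hx.fun_pow 2).const_mul a).fun_add (hx.const_mul b)).add_const c).fun_sub hy |>.congr_deriv
    (by ring)

lemma paramX_hasDerivAt {t : ℝ} (ht : t + 1 ≠ 0) :
    HasDerivAt paramX (2 * t * (t ^ 2 + t - 1) / (t + 1) ^ 2) t := by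
  unfold paramX
  have hid := hasDerivAt_id' t
  refine (((hid.fun_pow 2).fun_mul (hid.sub_const 1)).fun_div (hid.add_const 1) ht).congr_deriv ?_
  field_simp
  ring

lemma paramY_hasDerivAt {t : ℝ} (ht : t + 1 ≠ 0) :
    HasDerivAt paramY (2 * t * (t ^ 5 - 5 * t ^ 3 - 5 * t ^ 2 - 3) / (t + 1) ^ 3) t := by
  unfold paramY
  have hid := hasDerivAt_id' t
  have hden : 2 * (t + 1) ^ 2 ≠ 0 := by positivity
  refine ((((hid.fun_pow 2).add_const 1).fun_mul
    (((((hid.fun_pow 4).fun_sub ((hid.fun_pow 3).const_mul 2)).fun_sub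
      ((hid.fun_pow 2).const_mul 6)).fun_add (hid.const_mul 2)).add_const 1)).fun_div
    (((hid.add_const 1).fun_pow 2).const_mul 2) hden).congr_deriv ?_
  field_simp
  ring

theorem stmt9 (b t : ℝ) (h0 : t ≠ 0) (h1 : t ≠ 1) (h2 : t ≠ -1)
    (h3 : t ^ 2 + t - 1 ≠ 0) :
    let a := tanA t b
    let c := tanC t b
    let g : ℝ → ℝ := fun u => (a * (paramX u) ^ 2 + b * paramX u + c) - paramY u
    g t = 0 ∧ deriv g t = 0 := by
  intro a c g
  have ht : t + 1 ≠ 0 := by rwa [ne_eq, add_eq_zero_iff_eq_neg]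
  -- the shape in which `field_simp` meets the factor `t ^ 2 + t - 1`
  have hq : t * (t + 1) - 1 ≠ 0 := by rwa [show t * (t + 1) - 1 = t ^ 2 + t - 1 by ring]
  have hg := (paramX_hasDerivAt ht).quadratic_comp_sub a b c (paramY_hasDerivAt ht)
  refine ⟨?_, hg.deriv.trans ?_⟩
  · simp only [g, a, c, tanA, tanC, paramX, paramY]
    field_simp
    ring
  · simp only [a, tanA, paramX]
    field_simp
    ring
end

section
/- Let G be the group presented by two generators a, b subject to the relations (ab)^2 a = b (ab)^2 and a b a^{-1} b a b = b a b a. Then the kernel K of the homomorphism G → ℤ sending a ↦ 1 and b ↦ 1 is generated by b_0 = b a^{-1} and is isomorphic to ℤ/5, with conjugation by a acting on K by inversion. In particular G ≅ ℤ ⋉ ℤ/5 where the generator of ℤ acts by inversion. -/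
private def cnj13 {G : Type*} [Group G] (a t : G) (n : ℕ) : G := a ^ n * t * (a ^ n)⁻¹

private lemma tail13 {G : Type*} [Group G] {x y : G} (hA : y * y * y = x * x)
    (hB : x * x * x = y * y) : y = x⁻¹ ∧ x ^ 5 = 1 := by
  have h7 : x * x * x * y = x * x := by rw [hB]; exact hA
  have h8 : (x * x * x)⁻¹ * (x * x * x * y) = (x * x * x)⁻¹ * (x * x) := by rw [h7]
  have hy : y = x⁻¹ := by
    have l : (x * x * x)⁻¹ * (x * x * x * y) = y := by group
    have r : (x * x * x)⁻¹ * (x * x) = x⁻¹ := by group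
    rw [← l, h8, r]
  refine ⟨hy, ?_⟩
  have h9 : x * x * x = x⁻¹ * x⁻¹ := by rw [hB, hy]
  have h10 : x ^ 5 = (x * x * x) * (x * x) := by
    simp only [pow_succ, pow_zero, one_mul]; group
  rw [h10, h9]; group

lemma key13 {G : Type*} [Group G] (a b : G)
    (h1 : (a * b) ^ 2 * a = b * (a * b) ^ 2)
    (h2 : a * b * a⁻¹ * b * a * b = b * a * b * a) :
    (b * a⁻¹) ^ 5 = 1 ∧ a * (b * a⁻¹) * a⁻¹ = (b * a⁻¹)⁻¹ := by
  let T : ℕ → G := fun n => cnj13 a (b * a⁻¹) n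
  have hT : ∀ n, T (n + 1) = a * T n * a⁻¹ := by
    intro n; simp only [T, cnj13]; group
  have e2 : T 1 * T 1 * T 3 = T 0 * T 2 := by
    have l : T 1 * T 1 * T 3 = (a * b * a⁻¹ * b * a * b) * (b * a * b * a)⁻¹ * (T 0 * T 2) := by
      simp only [T, cnj13]; group
    rw [l, h2]; group
  have e1 : T 1 * T 3 = T 0 * T 2 * T 4 := by
    have l : T 1 * T 3 = ((a * b) ^ 2 * a) * (b * (a * b) ^ 2)⁻¹ * (T 0 * T 2 * T 4) := by
      simp only [T, cnj13, pow_two]; group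
    rw [l, h1]; group
  have e2' : T 2 * T 2 * T 4 = T 1 * T 3 := by
    calc T 2 * T 2 * T 4 = a * (T 1 * T 1 * T 3) * a⁻¹ := by simp only [T, cnj13]; group
      _ = a * (T 0 * T 2) * a⁻¹ := by rw [e2]
      _ = T 1 * T 3 := by simp only [T, cnj13]; group
  have h4a : T 4 = (T 2)⁻¹ * (T 0)⁻¹ * (T 1 * T 3) := by rw [e1]; group
  have h4b : T 4 = (T 2)⁻¹ * (T 2)⁻¹ * (T 1 * T 3) := by rw [← e2']; group
  have h20 : T 2 = T 0 := by
    have h6 := h4a.symm.trans h4b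
    exact (inv_injective (mul_left_cancel (mul_right_cancel h6))).symm
  have h31 : T 3 = T 1 := by
    calc T 3 = a * T 2 * a⁻¹ := hT 2
      _ = a * T 0 * a⁻¹ := by rw [h20]
      _ = T 1 := (hT 0).symm
  have h42 : T 4 = T 0 := by
    calc T 4 = a * T 3 * a⁻¹ := hT 3
      _ = a * T 1 * a⁻¹ := by rw [h31]
      _ = T 2 := (hT 1).symm
      _ = T 0 := h20
  have hA : T 1 * T 1 * T 1 = T 0 * T 0 := by
    calc T 1 * T 1 * T 1 = T 1 * T 1 * T 3 := by rw [h31]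
      _ = T 0 * T 2 := e2
      _ = T 0 * T 0 := by rw [h20]
  have hB : T 0 * T 0 * T 0 = T 1 * T 1 := by
    calc T 0 * T 0 * T 0 = T 2 * T 2 * T 4 := by rw [h20, h42]
      _ = T 1 * T 3 := e2'
      _ = T 1 * T 1 := by rw [h31]
  obtain ⟨hy, h5⟩ := tail13 hA hB
  have hT0 : T 0 = b * a⁻¹ := by simp only [T, cnj13]; group
  have hT1 : T 1 = a * (b * a⁻¹) * a⁻¹ := by simp only [T, cnj13]; group
  rw [hT0] at h5 hy
  rw [hT1] at hy
  exact ⟨h5, hy⟩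

/-- The two relators `(ab)²a·((b(ab)²)⁻¹` and `aba⁻¹bab·(baba)⁻¹` in the free group
on two generators (`true ↦ a`, `false ↦ b`). -/
def rels13 : Set (FreeGroup Bool) :=
  let a := FreeGroup.of true
  let b := FreeGroup.of false
  { (a * b) ^ 2 * a * (b * (a * b) ^ 2)⁻¹,
    a * b * a⁻¹ * b * a * b * (b * a * b * a)⁻¹ }

/-- The inversion automorphism of the abelian group `Multiplicative (ZMod 5)`. -/
def invAut5 : MulAut (Multiplicative (ZMod 5)) := MulEquiv.inv (Multiplicative (ZMod 5))

/-- The action of `ℤ` on `ℤ/5` whose generator acts by inversion. -/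
def invAction : Multiplicative ℤ →* MulAut (Multiplicative (ZMod 5)) :=
  zpowersHom _ invAut5

private lemma invAut5_sq : invAut5 * invAut5 = 1 := by
  ext x
  show ((x⁻¹)⁻¹ : Multiplicative (ZMod 5)) = x
  exact inv_inv x

/-- The homomorphism to the dihedral group of order 10, used to show nontriviality. -/
private def chi13 : PresentedGroup rels13 →* DihedralGroup 5 :=
  PresentedGroup.toGroup (f := fun x => if x then DihedralGroup.sr 0 else DihedralGroup.sr 1)
    (by
      intro r hr
      rcases hr with rfl | rfl <;>
        · simp only [map_mul, map_pow, map_inv, FreeGroup.lift_apply_of, if_true, if_false]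
          decide)

theorem stmt13 :
    let G := PresentedGroup rels13
    let a : G := PresentedGroup.of true
    let b : G := PresentedGroup.of false
    ∀ φ : G →* Multiplicative ℤ,
      φ a = Multiplicative.ofAdd 1 → φ b = Multiplicative.ofAdd 1 →
      (φ.ker = Subgroup.zpowers (b * a⁻¹) ∧
       orderOf (b * a⁻¹) = 5 ∧
       a * (b * a⁻¹) * a⁻¹ = (b * a⁻¹)⁻¹ ∧
       Nonempty (G ≃* Multiplicative (ZMod 5) ⋊[invAction] Multiplicative ℤ)) := by
  intro G a b φ hφa hφb
  -- the relations hold in G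
  have hmk : ∀ r ∈ rels13, PresentedGroup.mk rels13 r = 1 := fun r hr =>
    (QuotientGroup.eq_one_iff _).mpr (Subgroup.subset_normalClosure hr)
  have h1 : (a * b) ^ 2 * a = b * (a * b) ^ 2 := by
    have h := hmk ((FreeGroup.of true * FreeGroup.of false) ^ 2 * FreeGroup.of true *
      (FreeGroup.of false * (FreeGroup.of true * FreeGroup.of false) ^ 2)⁻¹)
      (Or.inl rfl)
    simp only [map_mul, map_pow, map_inv] at h
    exact mul_inv_eq_one.mp h
  have h2 : a * b * a⁻¹ * b * a * b = b * a * b * a := by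
    have h := hmk (FreeGroup.of true * FreeGroup.of false * (FreeGroup.of true)⁻¹ *
      FreeGroup.of false * FreeGroup.of true * FreeGroup.of false *
      (FreeGroup.of false * FreeGroup.of true * FreeGroup.of false * FreeGroup.of true)⁻¹)
      (Or.inr rfl)
    simp only [map_mul, map_pow, map_inv] at h
    exact mul_inv_eq_one.mp h
  obtain ⟨ht5, hconj⟩ := key13 a b h1 h2
  set t := b * a⁻¹ with ht
  -- nontriviality via the dihedral group
  have htne : t ≠ 1 := by
    intro h
    have h0 : chi13 t = 1 := by rw [h, map_one]
    rw [ht, map_mul, map_inv] at h0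
    have ha' : chi13 a = DihedralGroup.sr 0 := PresentedGroup.toGroup.of _
    have hb' : chi13 b = DihedralGroup.sr 1 := PresentedGroup.toGroup.of _
    rw [ha', hb'] at h0
    exact absurd h0 (by decide)
  have hord : orderOf t = 5 := by
    have hdvd := orderOf_dvd_of_pow_eq_one ht5
    rcases (Nat.prime_five).eq_one_or_self_of_dvd _ hdvd with h | h
    · exact absurd (orderOf_eq_one_iff.mp h) htne
    · exact h
  have hconjz : ∀ k : ℤ, a * t ^ k * a⁻¹ = (t ^ k)⁻¹ := by
    intro k
    rw [← conj_zpow, hconj, inv_zpow]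
  have ht5' : (5 : ℤ) • Additive.ofMul t = 0 := by
    have h5z : t ^ (5 : ℤ) = 1 := by
      rw [show (5 : ℤ) = ((5 : ℕ) : ℤ) from rfl, zpow_natCast, ht5]
    rw [← ofMul_zpow, h5z]
    rfl
  set fN : Multiplicative (ZMod 5) →* G :=
    AddMonoidHom.toMultiplicativeLeft
      (ZMod.lift 5 ⟨zmultiplesHom (Additive G) (Additive.ofMul t), ht5'⟩) with hfN
  have fN_apply : ∀ x : ZMod 5, fN (Multiplicative.ofAdd x) = t ^ (x.val : ℤ) := by
    intro x
    have hx : (((x.val : ℤ) : ZMod 5)) = x := by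
      rw [Int.cast_natCast, ZMod.natCast_val, ZMod.cast_id]
    have h0 : fN (Multiplicative.ofAdd (((x.val : ℤ) : ZMod 5)))
        = Additive.toMul (((x.val : ℤ)) • Additive.ofMul t) := by
      show Additive.toMul
        ((ZMod.lift 5 ⟨zmultiplesHom (Additive G) (Additive.ofMul t), ht5'⟩)
          (((x.val : ℤ) : ZMod 5))) = _
      rw [ZMod.lift_coe]
      rfl
    rw [hx] at h0
    rw [h0, toMul_zsmul]
    rfl
  have hstep : ∀ n : Multiplicative (ZMod 5), a * fN n * a⁻¹ = (fN n)⁻¹ := by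
    intro n
    rw [show n = Multiplicative.ofAdd (Multiplicative.toAdd n) from rfl, fN_apply, hconjz]
  have hstep' : ∀ n : Multiplicative (ZMod 5), a⁻¹ * fN n * a = (fN n)⁻¹ := by
    intro n
    have h0 := hstep n⁻¹
    rw [map_inv, inv_inv] at h0
    calc a⁻¹ * fN n * a = a⁻¹ * (a * (fN n)⁻¹ * a⁻¹) * a := by rw [h0]
      _ = (fN n)⁻¹ := by group
  have main : ∀ z : ℤ, ∀ n : Multiplicative (ZMod 5),
      fN ((invAut5 ^ z) n) = a ^ z * fN n * (a ^ z)⁻¹ := by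
    intro z
    induction z using Int.induction_on with
    | zero => intro n; simp
    | succ k ih =>
      intro n
      rw [zpow_add_one, MulAut.mul_apply, ih (invAut5 n),
        show invAut5 n = n⁻¹ from rfl, map_inv, ← hstep n, zpow_add_one]
      group
    | pred k ih =>
      intro n
      have hinv5 : invAut5⁻¹ = invAut5 := (eq_inv_of_mul_eq_one_left invAut5_sq).symm
      rw [zpow_sub_one, hinv5, MulAut.mul_apply, ih (invAut5 n),
        show invAut5 n = n⁻¹ from rfl, map_inv, ← hstep' n, zpow_sub_one]
      group
  have compat : ∀ g : Multiplicative ℤ,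
      fN.comp (invAction g).toMonoidHom =
        (MulAut.conj ((zpowersHom G a) g)).toMonoidHom.comp fN := by
    intro g
    refine MonoidHom.ext fun n => ?_
    show fN ((invAction g) n) = MulAut.conj ((zpowersHom G a) g) (fN n)
    rw [MulAut.conj_apply, zpowersHom_apply,
      show invAction g = invAut5 ^ (Multiplicative.toAdd g) from rfl]
    exact main _ n
  set ρ : (Multiplicative (ZMod 5) ⋊[invAction] Multiplicative ℤ) →* G :=
    SemidirectProduct.lift fN (zpowersHom G a) compat with hρ
  have hρinr : ρ (SemidirectProduct.inr (Multiplicative.ofAdd 1)) = a := by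
    rw [SemidirectProduct.lift_inr]
    exact zpow_one a
  have hval1 : (((1 : ZMod 5).val : ℤ)) = 1 := by decide
  have hρinlr : ρ (SemidirectProduct.inl (Multiplicative.ofAdd (1 : ZMod 5)) *
      SemidirectProduct.inr (Multiplicative.ofAdd 1)) = b := by
    rw [map_mul, SemidirectProduct.lift_inl, SemidirectProduct.lift_inr, fN_apply, hval1]
    show t ^ (1 : ℤ) * a ^ (1 : ℤ) = b
    rw [zpow_one, zpow_one, ht, inv_mul_cancel_right]
  have hsurj : Function.Surjective ρ := by
    intro g
    have hgen : ∀ x : Bool, PresentedGroup.of (rels := rels13) x ∈ ρ.range := by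
      intro x
      cases x
      · exact ⟨_, hρinlr⟩
      · exact ⟨_, hρinr⟩
    exact PresentedGroup.generated_by rels13 ρ.range hgen g
  have hφt : φ t = 1 := by
    rw [ht, map_mul, map_inv, hφa, hφb, mul_inv_cancel]
  have hφfN : ∀ n, φ (fN n) = 1 := by
    intro n
    rw [show n = Multiplicative.ofAdd (Multiplicative.toAdd n) from rfl, fN_apply,
      map_zpow, hφt, one_zpow]
  have hφaz : ∀ z : ℤ, φ (a ^ z) = Multiplicative.ofAdd z := by
    intro z
    rw [map_zpow, hφa]
    have h9 : Multiplicative.ofAdd z = Multiplicative.ofAdd (z • (1 : ℤ)) := by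
      rw [smul_eq_mul, mul_one]
    rw [h9, ofAdd_zsmul]
  have hρ_apply : ∀ x : Multiplicative (ZMod 5) ⋊[invAction] Multiplicative ℤ,
      ρ x = fN x.left * a ^ (Multiplicative.toAdd x.right) := fun _ => rfl
  have hφρ : ∀ x, φ (ρ x) = Multiplicative.ofAdd (Multiplicative.toAdd x.right) := by
    intro x
    rw [hρ_apply, map_mul, hφfN, one_mul, hφaz]
  have hleft_one : ∀ x, ρ x = 1 → Multiplicative.toAdd x.right = 0 → x = 1 := by
    intro x hx hz
    rw [hρ_apply, hz, zpow_zero, mul_one] at hx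
    have hvz : t ^ ((Multiplicative.toAdd x.left).val) = 1 := by
      rw [show x.left = Multiplicative.ofAdd (Multiplicative.toAdd x.left) from rfl,
        fN_apply, zpow_natCast] at hx
      exact hx
    have hdvd : 5 ∣ (Multiplicative.toAdd x.left).val := by
      have h9 := orderOf_dvd_of_pow_eq_one hvz
      rwa [hord] at h9
    have hv0 : (Multiplicative.toAdd x.left).val = 0 :=
      Nat.eq_zero_of_dvd_of_lt hdvd (ZMod.val_lt _)
    have hleft : x.left = 1 := by
      have h9 := (ZMod.val_eq_zero _).mp hv0
      exact ofAdd_toAdd x.left ▸ (by rw [h9]; rfl)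
    have hright : x.right = 1 := by
      exact ofAdd_toAdd x.right ▸ (by rw [hz]; rfl)
    obtain ⟨n, z⟩ := x
    simp only at hleft hright
    rw [hleft, hright]
    rfl
  have hinj : Function.Injective ρ := by
    refine (injective_iff_map_eq_one ρ).mpr fun x hx => ?_
    have hz : Multiplicative.toAdd x.right = 0 := by
      have h9 := hφρ x
      rw [hx, map_one] at h9
      exact ofAdd_eq_one.mp h9.symm
    exact hleft_one x hx hz
  refine ⟨?_, hord, hconj, ⟨(MulEquiv.ofBijective ρ ⟨hinj, hsurj⟩).symm⟩⟩
  ext g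
  constructor
  · intro hg
    rw [MonoidHom.mem_ker] at hg
    obtain ⟨x, rfl⟩ := hsurj g
    have hz : Multiplicative.toAdd x.right = 0 := by
      have h9 := hφρ x
      rw [hg] at h9
      exact ofAdd_eq_one.mp h9.symm
    rw [hρ_apply, hz, zpow_zero, mul_one]
    rw [show x.left = Multiplicative.ofAdd (Multiplicative.toAdd x.left) from rfl, fN_apply]
    exact Subgroup.zpow_mem_zpowers t _
  · intro hg
    obtain ⟨k, rfl⟩ := Subgroup.mem_zpowers_iff.mp hg
    rw [MonoidHom.mem_ker, map_zpow, hφt, one_zpow]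
end
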